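/- arXiv:1409.4821 — 3 statements merged into one kernel-verified Lean document; each statement's English description precedes it below -/
import Mathlib

section
/- Reverse variational implication under mass-energy bound: assume the setting of the normalized sharp Gagliardo–Nirenberg inequality, and suppose M[f]^{(1-s_c)/s_c} E[f] ≤ M[Q]^{(1-s_c)/s_c} E[Q], where E[f] = (1/2)∫|∇f|² − (1/(p+1))∫|f|^{p+1}. If (∫|f|^{p+1})^{s_c} M[f]^{1-s_c} < (∫|Q|^{p+1})^{s_c} M[Q]^{1-s_c}, then (∫|∇f|²)^{s_c} M[f]^{1-s_c} < (∫|∇Q|²)^{s_c} M[Q]^{1-s_c}. -/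
/-- Reverse variational implication under the mass-energy bound (real-number
formulation): with masses `Mf, MQ`, gradient terms `Gf, GQ`, potential terms
`Pf, PQ` (all positive), energies `E· = G·/2 − P·/(p+1)`, `s_c ∈ (0,1]`,
the Pohozaev identity `GQ = (N(p−1)/(2(p+1))) PQ`, the normalized sharp
Gagliardo–Nirenberg inequality and the mass-energy bound
`Mf^{(1−s_c)/s_c} Ef ≤ MQ^{(1−s_c)/s_c} EQ` imply: if
`Pf^{s_c} Mf^{1−s_c} < PQ^{s_c} MQ^{1−s_c}` then
`Gf^{s_c} Mf^{1−s_c} < GQ^{s_c} MQ^{1−s_c}`. -/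
theorem variational_reverse (N : ℕ) (hN : 1 ≤ N) (p sc : ℝ)
    (hp : 1 + 4 / (N : ℝ) < p)
    (hsc_def : sc = (N : ℝ) / 2 - 2 / (p - 1))
    (hsc_pos : 0 < sc) (hsc_le : sc ≤ 1)
    (Mf MQ Gf GQ Pf PQ : ℝ)
    (hMf : 0 < Mf) (hMQ : 0 < MQ) (hGf : 0 < Gf) (hGQ : 0 < GQ)
    (hPf : 0 < Pf) (hPQ : 0 < PQ)
    (hPoh : GQ = ((N : ℝ) * (p - 1) / (2 * (p + 1))) * PQ)
    (hGN : ((Mf ^ ((1 - sc) / sc) * Pf) / (MQ ^ ((1 - sc) / sc) * PQ))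
            ^ (4 / ((N : ℝ) * (p - 1)))
          ≤ (Mf ^ ((1 - sc) / sc) * Gf) / (MQ ^ ((1 - sc) / sc) * GQ))
    (hME : Mf ^ ((1 - sc) / sc) * (Gf / 2 - Pf / (p + 1))
          ≤ MQ ^ ((1 - sc) / sc) * (GQ / 2 - PQ / (p + 1)))
    (h : Pf ^ sc * Mf ^ (1 - sc) < PQ ^ sc * MQ ^ (1 - sc)) :
    Gf ^ sc * Mf ^ (1 - sc) < GQ ^ sc * MQ ^ (1 - sc) := by
  have hNpos : (0 : ℝ) < N := by exact_mod_cast hN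
  have hp1 : 1 < p := by nlinarith [div_pos (by norm_num : (0:ℝ) < 4) hNpos]
  have hp1pos : (0 : ℝ) < p + 1 := by linarith
  -- helper rewriting
  have key2 : ∀ a b : ℝ, 0 < a → 0 < b →
      (b ^ ((1 - sc) / sc) * a) ^ sc = a ^ sc * b ^ (1 - sc) := by
    intro a b ha hb
    rw [Real.mul_rpow (by positivity) ha.le, ← Real.rpow_mul hb.le,
      div_mul_cancel₀ _ hsc_pos.ne', mul_comm]
  -- from h : Mf^α * Pf < MQ^α * PQ
  have hP : Mf ^ ((1 - sc) / sc) * Pf < MQ ^ ((1 - sc) / sc) * PQ := by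
    rw [← Real.rpow_lt_rpow_iff (by positivity) (by positivity) hsc_pos,
      key2 Pf Mf hPf hMf, key2 PQ MQ hPQ hMQ]
    exact h
  have hkey : Mf ^ ((1 - sc) / sc) * Gf < MQ ^ ((1 - sc) / sc) * GQ := by
    have hA : (0 : ℝ) < Mf ^ ((1 - sc) / sc) := Real.rpow_pos_of_pos hMf _
    have hB : (0 : ℝ) < MQ ^ ((1 - sc) / sc) := Real.rpow_pos_of_pos hMQ _
    have h2 := mul_lt_mul_of_pos_right hP (show (0:ℝ) < (p+1)⁻¹ by positivity)
    have e1 : Mf ^ ((1 - sc) / sc) * (Gf / 2 - Pf / (p + 1))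
        = Mf ^ ((1 - sc) / sc) * Gf / 2 - Mf ^ ((1 - sc) / sc) * Pf * (p+1)⁻¹ := by
      ring
    have e2 : MQ ^ ((1 - sc) / sc) * (GQ / 2 - PQ / (p + 1))
        = MQ ^ ((1 - sc) / sc) * GQ / 2 - MQ ^ ((1 - sc) / sc) * PQ * (p+1)⁻¹ := by
      ring
    rw [e1, e2] at hME
    linarith
  rw [← key2 Gf Mf hGf hMf, ← key2 GQ MQ hGQ hMQ]
  exact Real.rpow_lt_rpow (by positivity) hkey hsc_pos
end

section
/- Sharp interpolation inequality: for p > 1 and N ≥ 1 there is a constant C_{p,N} with (C_{p,N})^{N(p-1)/2 + (p+1)} = (N/(2π)) ((p-1)/(p+1)) (π(1 + 2(p+1)/(N(p-1))))^{N(p-1)/4 + 1} (Γ((p+1)/(p-1))/Γ((p+1)/(p-1) + N/2))^{(p-1)/2}, such that every u ∈ L²(ℝ^N) ∩ L^{p+1}(ℝ^N) with xu ∈ L² satisfies ‖u‖_{L²} ≤ C_{p,N} (‖xu‖_{L²}^{N(p-1)/2} ‖u‖_{L^{p+1}}^{p+1})^{1/(N(p-1)/2 + (p+1))}. -/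
/-!
With `a = 2/(p-1)`, Young's inequality gives pointwise, for all `λ, μ > 0`,
`|u|² (1 - λ|x|²) ≤ μ |u|^(p+1) + c_a μ^(-a) (1 - λ|x|²)₊^(1+a)`, `c_a = a^a / (1+a)^(1+a)`.
Since `∫ (1 - λ|x|²)₊^(1+a) dx = λ^(-N/2) π^(N/2) Γ(a+2) / Γ(N/2+a+2)` (polar coordinates and
the beta integral), integration gives
`‖u‖₂² ≤ λ ‖xu‖₂² + μ ‖u‖_{p+1}^{p+1} + K μ^(-a) λ^(-N/2)`.
Minimising over `λ` and `μ` bounds `‖u‖₂²` by a multiple of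
`(‖xu‖₂^N ‖u‖_{p+1}^{(p+1)a})^(1/(1+a+N/2))`, and `Γ(s+1) = s Γ(s)` identifies the constant
with `C_{p,N}`.
-/

open MeasureTheory Real Set Module

theorem integral_rpow_mul_one_sub_rpow {a b : ℝ} (ha : 0 < a) (hb : 0 < b) :
    ∫ x in (0 : ℝ)..1, x ^ (a - 1) * (1 - x) ^ (b - 1) = Gamma a * Gamma b / Gamma (a + b) := by
  have hbeta := Complex.betaIntegral_eq_Gamma_mul_div a b (by simpa) (by simpa)
  rw [← Complex.ofReal_add, Complex.Gamma_ofReal, Complex.Gamma_ofReal, Complex.Gamma_ofReal,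
    Complex.betaIntegral, ← intervalIntegral.integral_congr (f := fun x : ℝ =>
      ((x ^ (a - 1) * (1 - x) ^ (b - 1) : ℝ) : ℂ)) fun x hx => ?_,
    intervalIntegral.integral_ofReal] at hbeta
  · exact_mod_cast hbeta
  · rw [uIcc_of_le zero_le_one] at hx
    push_cast
    rw [Complex.ofReal_cpow hx.1, Complex.ofReal_cpow (sub_nonneg.2 hx.2)]
    push_cast
    ring_nf

theorem integral_Ioi_rpow_mul_max_one_sub_sq_rpow {c s : ℝ} (hc : 0 < c) (hs : 0 < s) :
    ∫ y in Ioi (0 : ℝ), y ^ (c - 1) * (max (1 - y ^ 2) 0) ^ s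
      = Gamma (c / 2) * Gamma (s + 1) / (2 * Gamma (c / 2 + (s + 1))) := by
  set g : ℝ → ℝ := fun t => t ^ (c / 2 - 1) * (max (1 - t) 0) ^ s / 2
  have hsq : EqOn (fun y : ℝ => (2 * y ^ ((2 : ℝ) - 1)) • g (y ^ (2 : ℝ)))
      (fun y => y ^ (c - 1) * (max (1 - y ^ 2) 0) ^ s) (Ioi 0) := by
    intro y (hy : 0 < y)
    have hpow : y ^ ((2 : ℝ) - 1) * (y ^ (2 : ℝ)) ^ (c / 2 - 1) = y ^ (c - 1) := by
      rw [← rpow_mul hy.le, ← rpow_add hy]; ring_nf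
    simp only [g, smul_eq_mul, rpow_two]
    rw [← hpow, rpow_two]
    ring
  have hcut : EqOn g ((Ioc 0 1).indicator fun t => t ^ (c / 2 - 1) * (1 - t) ^ (s + 1 - 1) / 2)
      (Ioi 0) := by
    intro t ht
    rcases le_or_gt t 1 with h | h
    · rw [indicator_of_mem (show t ∈ Ioc 0 1 from ⟨ht, h⟩)]
      simp only [g, max_eq_left (by linarith : 0 ≤ 1 - t), add_sub_cancel_right]
    · rw [indicator_of_notMem fun h' => h.not_ge h'.2]
      simp only [g, max_eq_right (by linarith : 1 - t ≤ 0), zero_rpow hs.ne', mul_zero, zero_div]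
  rw [← setIntegral_congr_fun measurableSet_Ioi hsq, integral_comp_rpow_Ioi_of_pos two_pos,
    setIntegral_congr_fun measurableSet_Ioi hcut, setIntegral_indicator measurableSet_Ioc,
    inter_eq_self_of_subset_right Ioc_subset_Ioi_self,
    ← intervalIntegral.integral_of_le zero_le_one, intervalIntegral.integral_div,
    integral_rpow_mul_one_sub_rpow (by positivity) (by positivity)]
  ring

theorem young_inequality_scaled {a μ t c : ℝ} (ha : 0 < a) (hμ : 0 < μ) (ht : 0 ≤ t) :
    t * c ≤ μ * t ^ ((1 + a) / a)
      + a ^ a / (1 + a) ^ (1 + a) * μ ^ (-a) * (max c 0) ^ (1 + a) := by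
  have hq : 0 < (1 + a) / a := by positivity
  have hconj : ((1 + a) / a).HolderConjugate (1 + a) := by
    rw [holderConjugate_iff]; constructor
    · rw [lt_div_iff₀ ha]; linarith
    · field_simp; ring
  have hc0 := le_max_right c 0
  set k := ((1 + a) / a * μ) ^ (a / (1 + a)) with hk
  have hk0 : 0 < k := by positivity
  have hx : (k * t) ^ ((1 + a) / a) / ((1 + a) / a) = μ * t ^ ((1 + a) / a) := by
    rw [mul_rpow hk0.le ht, hk, ← rpow_mul (by positivity),
      show a / (1 + a) * ((1 + a) / a) = 1 by field_simp, rpow_one]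
    field_simp
  have hy : (k⁻¹ * max c 0) ^ (1 + a) / (1 + a)
      = a ^ a / (1 + a) ^ (1 + a) * μ ^ (-a) * (max c 0) ^ (1 + a) := by
    have hkpow : k⁻¹ ^ (1 + a) = (a / (1 + a)) ^ a * μ ^ (-a) := by
      rw [hk, ← rpow_neg_one, ← rpow_mul (by positivity), ← rpow_mul (by positivity),
        show a / (1 + a) * (-1 * (1 + a)) = -a by field_simp, mul_rpow hq.le hμ.le,
        ← inv_div, inv_rpow (by positivity), ← rpow_neg (by positivity), neg_neg]
    rw [mul_rpow (by positivity) hc0, hkpow, div_rpow ha.le (by positivity),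
      rpow_add (by positivity : (0 : ℝ) < 1 + a) 1 a, rpow_one]
    field_simp
  calc t * c ≤ t * max c 0 := mul_le_mul_of_nonneg_left (le_max_left c 0) ht
    _ = (k * t) * (k⁻¹ * max c 0) := by field_simp
    _ ≤ _ := by
      rw [← hx, ← hy]
      exact young_inequality_of_nonneg (by positivity) (by positivity) hconj

/-- The first factor is the constant of `young_inequality_scaled`, the second is
`∫ (1 - ‖x‖²)₊^(1+a)` in dimension `2b`. -/
noncomputable def youngBallConst (a b : ℝ) : ℝ :=
  a ^ a / (1 + a) ^ (1 + a) * (π ^ b * Gamma (a + 2) / Gamma (b + (a + 2)))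

theorem youngBallConst_pos {a b : ℝ} (ha : 0 < a) (hb : 0 < b) : 0 < youngBallConst a b := by
  unfold youngBallConst
  positivity

section InnerProductSpace

variable {E : Type*} [NormedAddCommGroup E] [InnerProductSpace ℝ E] [FiniteDimensional ℝ E]
  [MeasurableSpace E] [BorelSpace E] [Nontrivial E]

theorem integral_max_one_sub_norm_sq_rpow {s : ℝ} (hs : 0 < s) :
    ∫ x : E, (max (1 - ‖x‖ ^ 2) 0) ^ s
      = π ^ (finrank ℝ E / 2 : ℝ) * Gamma (s + 1) / Gamma (finrank ℝ E / 2 + (s + 1)) := by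
  have hn : (0 : ℝ) < finrank ℝ E := Nat.cast_pos.2 finrank_pos
  have hpow : ∀ y : ℝ, y ^ (finrank ℝ E - 1) = y ^ ((finrank ℝ E : ℝ) - 1) := fun y => by
    rw [← rpow_natCast, Nat.cast_sub finrank_pos, Nat.cast_one]
  have hball : volume.real (Metric.ball (0 : E) 1)
      = π ^ (finrank ℝ E / 2 : ℝ) / Gamma (finrank ℝ E / 2 + 1) := by
    rw [measureReal_def, InnerProductSpace.volume_ball, ENNReal.ofReal_one, one_pow, one_mul,
      ENNReal.toReal_ofReal (by positivity), sqrt_eq_rpow, ← rpow_natCast, ← rpow_mul pi_pos.le]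
    ring_nf
  rw [integral_fun_norm_addHaar volume fun r => (max (1 - r ^ 2) 0) ^ s]
  simp only [smul_eq_mul, nsmul_eq_mul, hpow]
  rw [integral_Ioi_rpow_mul_max_one_sub_sq_rpow hn hs, hball, Gamma_add_one (by positivity)]
  field_simp

theorem integral_max_one_sub_mul_norm_sq_rpow {s r : ℝ} (hs : 0 < s) (hr : 0 < r) :
    ∫ x : E, (max (1 - r * ‖x‖ ^ 2) 0) ^ s
      = r ^ (-(finrank ℝ E / 2 : ℝ)) * (π ^ (finrank ℝ E / 2 : ℝ) * Gamma (s + 1)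
        / Gamma (finrank ℝ E / 2 + (s + 1))) := by
  have hscale : ∀ x : E,
      (max (1 - ‖√r • x‖ ^ 2) 0) ^ s = (max (1 - r * ‖x‖ ^ 2) 0) ^ s := fun x => by
    rw [norm_smul, norm_of_nonneg (sqrt_nonneg r), mul_pow, sq_sqrt hr.le]
  rw [← integral_congr_ae (Filter.Eventually.of_forall hscale),
    Measure.integral_comp_smul_of_nonneg volume (fun x : E => (max (1 - ‖x‖ ^ 2) 0) ^ s) √r
      (hR := sqrt_nonneg r),
    integral_max_one_sub_norm_sq_rpow hs, smul_eq_mul, sqrt_eq_rpow, ← rpow_natCast,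
    ← rpow_mul hr.le, ← rpow_neg hr.le]
  ring_nf

theorem integrable_max_one_sub_mul_norm_sq_rpow {s r : ℝ} (hs : 0 < s) (hr : 0 < r) :
    Integrable fun x : E => (max (1 - r * ‖x‖ ^ 2) 0) ^ s := by
  refine Integrable.of_integral_ne_zero ?_
  rw [integral_max_one_sub_mul_norm_sq_rpow hs hr]
  positivity

theorem integral_le_mul_moment_add_mul_integral_rpow {f : E → ℝ} {a r μ : ℝ}
    (ha : 0 < a) (hr : 0 < r) (hμ : 0 < μ) (hf : 0 ≤ f) (hf_int : Integrable f)
    (hf_mom : Integrable fun x => ‖x‖ ^ 2 * f x)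
    (hf_pow : Integrable fun x => f x ^ ((1 + a) / a)) :
    ∫ x, f x ≤ r * (∫ x, ‖x‖ ^ 2 * f x) + μ * (∫ x, f x ^ ((1 + a) / a))
      + youngBallConst a (finrank ℝ E / 2) * μ ^ (-a) * r ^ (-(finrank ℝ E / 2 : ℝ)) := by
  have hw := integrable_max_one_sub_mul_norm_sq_rpow (E := E) (by positivity : 0 < 1 + a) hr
  have hmono := integral_mono (f := fun x => f x - r * (‖x‖ ^ 2 * f x))
    (g := fun x => μ * f x ^ ((1 + a) / a)
      + a ^ a / (1 + a) ^ (1 + a) * μ ^ (-a) * (max (1 - r * ‖x‖ ^ 2) 0) ^ (1 + a))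
    (hf_int.sub (hf_mom.const_mul r)) ((hf_pow.const_mul μ).add (hw.const_mul _)) fun x =>
      (by ring : f x - r * (‖x‖ ^ 2 * f x) = f x * (1 - r * ‖x‖ ^ 2)).trans_le
        (young_inequality_scaled ha hμ (hf x))
  rw [integral_sub hf_int (hf_mom.const_mul r), integral_add (hf_pow.const_mul μ) (hw.const_mul _),
    integral_const_mul, integral_const_mul, integral_const_mul,
    integral_max_one_sub_mul_norm_sq_rpow (by positivity) hr,
    show 1 + a + 1 = a + 2 by ring] at hmono
  rw [youngBallConst]
  linarith

end InnerProductSpace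

theorem integral_pos_of_support_ae_subset {α : Type*} [MeasurableSpace α] {μ : Measure α}
    {f g : α → ℝ} (hf : 0 ≤ f) (hg : 0 ≤ g) (hg_int : Integrable g μ)
    (hfg : Function.support f ≤ᵐ[μ] Function.support g) (hf_pos : 0 < ∫ x, f x ∂μ) :
    0 < ∫ x, g x ∂μ := by
  rw [integral_pos_iff_support_of_nonneg hf (Integrable.of_integral_ne_zero hf_pos.ne')] at hf_pos
  rw [integral_pos_iff_support_of_nonneg hg hg_int]
  exact hf_pos.trans_le (measure_mono_ae hfg)

theorem exists_mul_add_mul_add_mul_rpow_mul_rpow_eq {K A B a b : ℝ} (hK : 0 < K) (hA : 0 < A)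
    (hB : 0 < B) (ha : 0 < a) (hb : 0 < b) :
    ∃ r > 0, ∃ μ > 0, r * A + μ * B + K * μ ^ (-a) * r ^ (-b)
      = (1 + a + b) * (K * a ^ (-a) * b ^ (-b) * A ^ b * B ^ a) ^ (1 / (1 + a + b)) := by
  set T := (K * a ^ (-a) * b ^ (-b) * A ^ b * B ^ a) ^ (1 / (1 + a + b))
  have hT : 0 < T := by positivity
  have hTpow : T ^ (1 + a + b) = K * a ^ (-a) * b ^ (-b) * A ^ b * B ^ a := by
    rw [← rpow_mul (by positivity), one_div_mul_cancel (by positivity), rpow_one]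
  -- at the minimiser the three terms are `b T`, `a T` and `T`
  refine ⟨b * T / A, by positivity, a * T / B, by positivity, ?_⟩
  have hbalance : K * (a * T / B) ^ (-a) * (b * T / A) ^ (-b) = T := by
    calc K * (a * T / B) ^ (-a) * (b * T / A) ^ (-b)
        = K * a ^ (-a) * b ^ (-b) * A ^ b * B ^ a * (T ^ a * T ^ b)⁻¹ := by
          rw [rpow_neg (by positivity), rpow_neg (by positivity), rpow_neg ha.le, rpow_neg hb.le,
            div_rpow (by positivity) hB.le, div_rpow (by positivity) hA.le, mul_rpow ha.le hT.le,
            mul_rpow hb.le hT.le]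
          field_simp
      _ = T ^ (1 + a + b) * (T ^ (a + b))⁻¹ := by rw [hTpow, rpow_add hT]
      _ = T := by
          rw [← rpow_neg hT.le, ← rpow_add hT, show 1 + a + b + -(a + b) = 1 by ring, rpow_one]
  rw [hbalance]
  field_simp
  ring

/-- `(C_{p,N})^(N(p-1)/2 + (p+1))` written in the variables `a = 2/(p-1)` and `b = N/2`. -/
noncomputable def sharpConst (a b : ℝ) : ℝ :=
  b / π * (1 + a)⁻¹ * (π * (1 + (1 + a) / b)) ^ (b / a + 1)
    * (Gamma (1 + a) / Gamma (1 + a + b)) ^ (1 / a)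

theorem sharpConst_pos {a b : ℝ} (ha : 0 < a) (hb : 0 < b) : 0 < sharpConst a b := by
  unfold sharpConst
  positivity

theorem sharpConst_rpow {a b : ℝ} (ha : 0 < a) (hb : 0 < b) :
    sharpConst a b ^ a
      = (1 + a + b) ^ (1 + a + b) * youngBallConst a b * a ^ (-a) * b ^ (-b) := by
  have hΓa : Gamma (a + 2) = (1 + a) * Gamma (1 + a) := by
    rw [show a + 2 = (1 + a) + 1 by ring, Gamma_add_one (by positivity)]
  have hΓb : Gamma (b + (a + 2)) = (1 + a + b) * Gamma (1 + a + b) := by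
    rw [show b + (a + 2) = (1 + a + b) + 1 by ring, Gamma_add_one (by positivity)]
  have hbase : π * (1 + (1 + a) / b) = π / b * (1 + a + b) := by field_simp; ring
  calc sharpConst a b ^ a
        = (b / π) ^ a * ((1 + a)⁻¹) ^ a * ((π / b * (1 + a + b)) ^ (b / a + 1)) ^ a
          * ((Gamma (1 + a) / Gamma (1 + a + b)) ^ (1 / a)) ^ a := by
        rw [sharpConst, hbase, mul_rpow (by positivity) (by positivity),
          mul_rpow (by positivity) (by positivity), mul_rpow (by positivity) (by positivity)]
    _ = ((π / b) ^ a)⁻¹ * ((1 + a) ^ a)⁻¹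
          * ((π / b) ^ b * (π / b) ^ a * (1 + a + b) ^ (a + b))
          * (Gamma (1 + a) / Gamma (1 + a + b)) := by
        rw [← rpow_mul (by positivity), ← rpow_mul (by positivity), one_div_mul_cancel ha.ne',
          rpow_one, show (b / a + 1) * a = b + a by field_simp, ← inv_div,
          inv_rpow (by positivity), inv_rpow (by positivity),
          mul_rpow (by positivity) (by positivity), rpow_add (by positivity), add_comm b a]
    _ = _ := by
        rw [youngBallConst, hΓa, hΓb, div_rpow pi_pos.le hb.le, div_rpow pi_pos.le hb.le b,
          rpow_neg ha.le, rpow_neg hb.le, rpow_one_add' (by positivity) (by positivity),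
          add_assoc, rpow_one_add' (by positivity) (by positivity)]
        field_simp

theorem rpow_mul_rpow_eq_of_rpow_eq {a b C K A B : ℝ} (ha : 0 < a) (hb : 0 < b) (hC : 0 < C)
    (hK : 0 < K) (hA : 0 < A) (hB : 0 < B) (hCK : C ^ a = (1 + a + b) ^ (1 + a + b) * K) :
    C ^ (a / (2 * (1 + a + b))) * (A ^ (b / a) * B) ^ (a / (2 * (1 + a + b)))
      = ((1 + a + b) * (K * A ^ b * B ^ a) ^ (1 / (1 + a + b))) ^ (1 / 2 : ℝ) := by
  have hm : 0 < 1 + a + b := by positivity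
  have hlog := congrArg log hCK
  rw [log_rpow hC, log_mul (by positivity) hK.ne', log_rpow hm] at hlog
  refine log_injOn_pos (mem_Ioi.2 (by positivity)) (mem_Ioi.2 (by positivity)) ?_
  rw [log_mul (by positivity) (by positivity), log_rpow hC, log_rpow (by positivity),
    log_mul (by positivity) hB.ne', log_rpow hA, log_rpow (by positivity),
    log_mul hm.ne' (by positivity), log_rpow (by positivity),
    log_mul (by positivity) (by positivity), log_mul hK.ne' (by positivity), log_rpow hA,
    log_rpow hB]
  field_simp
  linear_combination hlog

theorem sharp_interpolation_rhs_eq {n p A B : ℝ} (hn : 0 < n) (hp : 1 < p) (hA : 0 < A) (hB : 0 < B) :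
    ((n / (2 * π)) * ((p - 1) / (p + 1))
        * (π * (1 + 2 * (p + 1) / (n * (p - 1)))) ^ (n * (p - 1) / 4 + 1)
        * (Gamma ((p + 1) / (p - 1)) / Gamma ((p + 1) / (p - 1) + n / 2)) ^ ((p - 1) / 2))
      ^ (1 / (n * (p - 1) / 2 + (p + 1)))
    * (((A ^ ((1 : ℝ) / 2)) ^ (n * (p - 1) / 2)) * ((B ^ (1 / (p + 1))) ^ (p + 1)))
      ^ (1 / (n * (p - 1) / 2 + (p + 1)))
    = ((1 + 2 / (p - 1) + n / 2) * (youngBallConst (2 / (p - 1)) (n / 2)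
        * (2 / (p - 1)) ^ (-(2 / (p - 1))) * (n / 2) ^ (-(n / 2))
        * A ^ (n / 2) * B ^ (2 / (p - 1))) ^ (1 / (1 + 2 / (p - 1) + n / 2))) ^ (1 / 2 : ℝ) := by
  obtain ⟨a, ha, rfl⟩ : ∃ a, 0 < a ∧ p = 1 + 2 / a :=
    ⟨2 / (p - 1), by linarith [div_pos two_pos (sub_pos.2 hp)], by field_simp; ring⟩
  obtain ⟨b, hb, rfl⟩ : ∃ b, 0 < b ∧ n = 2 * b := ⟨n / 2, by positivity, by ring⟩
  simp only [add_sub_cancel_left]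
  rw [show 2 / (2 / a) = a by field_simp, show 2 * b / 2 = b by ring,
    show 1 / (2 * b * (2 / a) / 2 + (1 + 2 / a + 1)) = a / (2 * (1 + a + b)) by field_simp; ring,
    show (1 + 2 / a + 1) / (2 / a) = 1 + a by field_simp; ring,
    show 2 * b / (2 * π) = b / π by field_simp,
    show 2 / a / (1 + 2 / a + 1) = (1 + a)⁻¹ by field_simp; ring,
    show 2 * (1 + 2 / a + 1) / (2 * b * (2 / a)) = (1 + a) / b by field_simp; ring,
    show 2 * b * (2 / a) / 4 + 1 = b / a + 1 by field_simp; ring,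
    show 2 / a / 2 = 1 / a by field_simp]
  rw [← rpow_mul hA.le, ← rpow_mul hB.le, show 1 / 2 * (2 * b * (2 / a) / 2) = b / a by ring,
    one_div_mul_cancel (by positivity), rpow_one]
  exact rpow_mul_rpow_eq_of_rpow_eq (C := sharpConst a b) ha hb (sharpConst_pos ha hb)
    (by have := youngBallConst_pos ha hb; positivity) hA hB (by rw [sharpConst_rpow ha hb]; ring)

/-- Sharp interpolation inequality: for `p > 1`, `N ≥ 1`, with the constant
`C_{p,N}` defined by
`(C_{p,N})^{N(p−1)/2+(p+1)} = (N/(2π))((p−1)/(p+1))(π(1+2(p+1)/(N(p−1))))^{N(p−1)/4+1}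
  (Γ((p+1)/(p−1))/Γ((p+1)/(p−1)+N/2))^{(p−1)/2}`,
every `u ∈ L² ∩ L^{p+1}` with `xu ∈ L²` satisfies
`‖u‖_{L²} ≤ C_{p,N} (‖xu‖_{L²}^{N(p−1)/2} ‖u‖_{L^{p+1}}^{p+1})^{1/(N(p−1)/2+(p+1))}`. -/
theorem sharp_interpolation (N : ℕ) (hN : 1 ≤ N) (p : ℝ) (hp : 1 < p)
    (u : EuclideanSpace ℝ (Fin N) → ℂ)
    (hu_L2 : Integrable (fun x => ‖u x‖ ^ 2))
    (hu_Lp1 : Integrable (fun x => ‖u x‖ ^ (p + 1)))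
    (hu_var : Integrable (fun x => ‖x‖ ^ 2 * ‖u x‖ ^ 2)) :
    (∫ x, ‖u x‖ ^ 2) ^ ((1 : ℝ) / 2)
      ≤ (((N : ℝ) / (2 * π)) * ((p - 1) / (p + 1))
            * (π * (1 + 2 * (p + 1) / ((N : ℝ) * (p - 1)))) ^ ((N : ℝ) * (p - 1) / 4 + 1)
            * (Real.Gamma ((p + 1) / (p - 1))
                / Real.Gamma ((p + 1) / (p - 1) + (N : ℝ) / 2)) ^ ((p - 1) / 2))
          ^ (1 / ((N : ℝ) * (p - 1) / 2 + (p + 1)))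
        * ((((∫ x, ‖x‖ ^ 2 * ‖u x‖ ^ 2) ^ ((1 : ℝ) / 2)) ^ ((N : ℝ) * (p - 1) / 2))
            * (((∫ x, ‖u x‖ ^ (p + 1)) ^ (1 / (p + 1))) ^ (p + 1)))
          ^ (1 / ((N : ℝ) * (p - 1) / 2 + (p + 1))) := by
  have hp1 : 0 < p - 1 := sub_pos.2 hp
  have ha : 0 < 2 / (p - 1) := by positivity
  have hb : 0 < (N : ℝ) / 2 := by positivity
  have : Nonempty (Fin N) := ⟨⟨0, hN⟩⟩
  have hpow : ∀ x, (‖u x‖ ^ 2) ^ ((1 + 2 / (p - 1)) / (2 / (p - 1))) = ‖u x‖ ^ (p + 1) :=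
    fun x => by
      rw [← rpow_natCast, ← rpow_mul (norm_nonneg _)]
      congr 1
      field_simp
      ring
  rcases (integral_nonneg fun x => sq_nonneg ‖u x‖ : 0 ≤ ∫ x, ‖u x‖ ^ 2).eq_or_lt
    with hS | hS
  · rw [← hS, zero_rpow one_half_pos.ne']
    positivity
  have hA : 0 < ∫ x, ‖x‖ ^ 2 * ‖u x‖ ^ 2 :=
    integral_pos_of_support_ae_subset (fun x => by positivity) (fun x => by positivity) hu_var
      (by filter_upwards [Measure.ae_ne volume 0] with x hx hux using
          mul_ne_zero (pow_ne_zero 2 (norm_ne_zero_iff.2 hx)) hux) hS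
  have hB : 0 < ∫ x, ‖u x‖ ^ (p + 1) :=
    integral_pos_of_support_ae_subset (fun x => by positivity) (fun x => by positivity) hu_Lp1
      (Filter.Eventually.of_forall fun x hux =>
        (rpow_pos_of_pos ((norm_nonneg (u x)).lt_of_ne' fun h => hux (by simp [h])) _).ne') hS
  obtain ⟨r, hr, μ, hμ, hopt⟩ :=
    exists_mul_add_mul_add_mul_rpow_mul_rpow_eq (youngBallConst_pos ha hb) hA hB ha hb
  have hbound := integral_le_mul_moment_add_mul_integral_rpow (f := fun x => ‖u x‖ ^ 2)
    ha hr hμ (fun x => by positivity) hu_L2 hu_var (by simpa only [hpow] using hu_Lp1)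
  simp only [hpow, finrank_euclideanSpace_fin] at hbound
  calc _ ≤ _ := rpow_le_rpow hS.le (hbound.trans_eq hopt) one_half_pos.le
    _ = _ := (sharp_interpolation_rhs_eq (by positivity) hp hA hB).symm
end

section
/- Blow-up for the mechanical ODE, case (B): in the same setting (0 < γ < 1, −1 < δ < γ, ω > 0, U(b) = b^{δ+1}/(δ+1) − b^{γ+1}/(γ+1), ℰ(s) = (ω/2)(b')² + U(b)), if ℰ(0) > U_max and b'(0) < 0, then any nonnegative C² solution of ω b'' + U'(b) ≤ 0 satisfies b'(s) ≤ −√((2/ω)(ℰ(0) − U_max)) for as long as it exists, and hence cannot exist on all of [0, ∞). -/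
/-!
While `b' < 0` the energy `ℰ = (ω/2) b'² + U(b)` is nondecreasing, because
`ℰ' = b' (ω b'' + U'(b)) ≥ 0`. Since `U ≤ U_max` on `[0, ∞)` (weighted AM-GM), this gives
`(ω/2) b'² ≥ ℰ(0) - U_max > 0`, so `b'` stays below a fixed negative constant for as long as it
stays negative, and by continuity it therefore never reaches `0`. A nonnegative function whose
derivative is bounded above by a negative constant cannot live on all of `[0, ∞)`.
-/

open Set

noncomputable section

def mechPotential (δ γ x : ℝ) : ℝ := x ^ (δ + 1) / (δ + 1) - x ^ (γ + 1) / (γ + 1)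

def mechEnergy (ω δ γ : ℝ) (b : ℝ → ℝ) (s : ℝ) : ℝ :=
  ω / 2 * deriv b s ^ 2 + mechPotential δ γ (b s)

end

lemma rpow_div_sub_rpow_div_le {p q x : ℝ} (hp : 0 < p) (hpq : p < q) (hx : 0 ≤ x) :
    x ^ p / p - x ^ q / q ≤ 1 / p - 1 / q := by
  have hq : 0 < q := hp.trans hpq
  -- `x ^ p = (x ^ q) ^ (p / q) * 1 ^ (1 - p / q) ≤ (p / q) x ^ q + (1 - p / q)`
  have amgm := Real.geom_mean_le_arith_mean2_weighted (div_pos hp hq).le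
    (sub_nonneg.2 ((div_le_one hq).2 hpq.le)) (Real.rpow_nonneg hx q) zero_le_one
    (add_sub_cancel (p / q) 1)
  rw [Real.one_rpow, mul_one, ← Real.rpow_mul hx, mul_div_cancel₀ p hq.ne'] at amgm
  rw [div_sub_div _ _ hp.ne' hq.ne', div_sub_div _ _ hp.ne' hq.ne',
    div_le_div_iff_of_pos_right (mul_pos hp hq)]
  have hw₁ : p / q * x ^ q * q = p * x ^ q := by field_simp
  have hw₂ : (1 - p / q) * q = q - p := by field_simp
  nlinarith

lemma mechPotential_le {δ γ x : ℝ} (hδ : -1 < δ) (hδγ : δ < γ) (hx : 0 ≤ x) :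
    mechPotential δ γ x ≤ 1 / (δ + 1) - 1 / (γ + 1) :=
  rpow_div_sub_rpow_div_le (by linarith) (by linarith) hx

lemma hasDerivAt_mechPotential {δ γ x : ℝ} (hδ : δ + 1 ≠ 0) (hγ : γ + 1 ≠ 0) (hx : 0 < x) :
    HasDerivAt (mechPotential δ γ) (x ^ δ - x ^ γ) x := by
  have hrpow (p : ℝ) (hp : p + 1 ≠ 0) : HasDerivAt (fun y ↦ y ^ (p + 1) / (p + 1)) (x ^ p) x := by
    have := (Real.hasDerivAt_rpow_const (p := p + 1) (Or.inl hx.ne')).div_const (p + 1)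
    rwa [add_sub_cancel_right, mul_div_cancel_left₀ _ hp] at this
  exact (hrpow δ hδ).sub (hrpow γ hγ)

lemma continuousOn_mechPotential {δ γ : ℝ} (hδ : -1 < δ) (hγ : -1 < γ) :
    ContinuousOn (mechPotential δ γ) (Ici 0) := by
  have hrpow (p : ℝ) (hp : -1 < p) : ContinuousOn (fun y : ℝ ↦ y ^ (p + 1) / (p + 1)) (Ici 0) :=
    (continuousOn_id.rpow_const fun _ _ ↦ Or.inr (by linarith)).div_const _
  exact (hrpow δ hδ).sub (hrpow γ hγ)

lemma hasDerivAt_mechEnergy {ω δ γ t : ℝ} {b : ℝ → ℝ} (hδ : δ + 1 ≠ 0) (hγ : γ + 1 ≠ 0)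
    (hb : DifferentiableAt ℝ b t) (hb' : DifferentiableAt ℝ (deriv b) t) (hbt : 0 < b t) :
    HasDerivAt (mechEnergy ω δ γ b)
      (deriv b t * (ω * deriv (deriv b) t + (b t ^ δ - b t ^ γ))) t := by
  refine (((hb'.hasDerivAt.pow 2).const_mul (ω / 2)).add
    ((hasDerivAt_mechPotential hδ hγ hbt).comp t hb.hasDerivAt)).congr_deriv ?_
  simp only [Nat.cast_ofNat, Nat.add_one_sub_one, pow_one]
  ring

lemma mechEnergy_le_of_deriv_neg {ω δ γ a s : ℝ} {b : ℝ → ℝ} (hδ : -1 < δ) (hγ : -1 < γ)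
    (has : a ≤ s) (hb' : ContinuousOn (deriv b) (Icc a s))
    (hb'' : ∀ t ∈ Ioo a s, DifferentiableAt ℝ (deriv b) t)
    (hneg : ∀ t ∈ Icc a s, deriv b t < 0) (hbs : 0 ≤ b s)
    (hode : ∀ t ∈ Ioo a s, ω * deriv (deriv b) t + (b t ^ δ - b t ^ γ) ≤ 0) :
    mechEnergy ω δ γ b a ≤ mechEnergy ω δ γ b s := by
  have hdiff (t : ℝ) (ht : t ∈ Icc a s) : DifferentiableAt ℝ b t :=
    differentiableAt_of_deriv_ne_zero (hneg t ht).ne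
  have hbc : ContinuousOn b (Icc a s) := fun t ht ↦ (hdiff t ht).continuousAt.continuousWithinAt
  have hanti : StrictAntiOn b (Icc a s) :=
    strictAntiOn_of_deriv_neg (convex_Icc a s) hbc fun t ht ↦
      hneg t (interior_subset (s := Icc a s) ht)
  -- `U` need not be differentiable at `0` (`δ + 1 < 1` is allowed), so we stay where `b > 0`.
  have hpos (t : ℝ) (ht : t ∈ Ioo a s) : 0 < b t :=
    hbs.trans_lt (hanti (Ioo_subset_Icc_self ht) (right_mem_Icc.2 has) ht.2)
  have hE (t : ℝ) (ht : t ∈ Ioo a s) := hasDerivAt_mechEnergy (ω := ω) (δ := δ) (γ := γ)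
    (by linarith) (by linarith) (hdiff t (Ioo_subset_Icc_self ht)) (hb'' t ht) (hpos t ht)
  have hEc : ContinuousOn (mechEnergy ω δ γ b) (Icc a s) :=
    (continuousOn_const.mul (hb'.pow 2)).add <|
      (continuousOn_mechPotential hδ hγ).comp hbc fun t ht ↦ hbs.trans (hanti.antitoneOn ht
        (right_mem_Icc.2 has) ht.2)
  refine monotoneOn_of_deriv_nonneg (convex_Icc a s) hEc ?_ ?_ (left_mem_Icc.2 has)
    (right_mem_Icc.2 has) has
  · rw [interior_Icc]
    exact fun t ht ↦ (hE t ht).differentiableAt.differentiableWithinAt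
  · rw [interior_Icc]
    intro t ht
    rw [(hE t ht).deriv]
    exact mul_nonneg_of_nonpos_of_nonpos (hneg t (Ioo_subset_Icc_self ht)).le (hode t ht)

lemma le_neg_sqrt_of_neg_of_le_sq {x y : ℝ} (hx : x < 0) (h : y ≤ x ^ 2) : x ≤ -√y := by
  have := Real.sqrt_le_sqrt h
  rw [Real.sqrt_sq_eq_abs, abs_of_neg hx] at this
  linarith

/-- The first point of `[a, T)` where `g ≥ 0` would be a point where `hstep` fails. -/
lemma forall_mem_Ico_neg_of_continuousOn {g : ℝ → ℝ} {a T : ℝ}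
    (hg : ContinuousOn g (Ico a T)) (ha : g a < 0)
    (hstep : ∀ t ∈ Ioo a T, (∀ r ∈ Ico a t, g r < 0) → g t < 0) :
    ∀ t ∈ Ico a T, g t < 0 := by
  by_contra! ⟨u, hu, hgu⟩
  set N := Icc a u ∩ g ⁻¹' Ici 0
  have hNsub : Icc a u ⊆ Ico a T := Icc_subset_Ico_right hu.2
  have hNclosed : IsClosed N :=
    (hg.mono hNsub).preimage_isClosed_of_isClosed isClosed_Icc isClosed_Ici
  have hNbdd : BddBelow N := ⟨a, fun t ht ↦ ht.1.1⟩
  have ht₀ : sInf N ∈ N := hNclosed.csInf_mem ⟨u, ⟨⟨hu.1, le_rfl⟩, hgu⟩⟩ hNbdd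
  have hat₀ : a < sInf N := ht₀.1.1.lt_of_ne fun h ↦ (h ▸ ha).not_ge ht₀.2
  refine (hstep _ ⟨hat₀, ht₀.1.2.trans_lt hu.2⟩ fun r hr ↦ ?_).not_ge ht₀.2
  by_contra! hgr
  exact hr.2.not_ge (csInf_le hNbdd ⟨⟨hr.1, hr.2.le.trans ht₀.1.2⟩, hgr⟩)

lemma forall_mem_Ico_le_neg_of_bootstrap {g : ℝ → ℝ} {a T c : ℝ}
    (hg : ContinuousOn g (Ico a T)) (ha : g a < 0) (hc : 0 < c)
    (hboot : ∀ s ∈ Ico a T, (∀ t ∈ Icc a s, g t < 0) → g s ≤ -c) :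
    ∀ s ∈ Ico a T, g s ≤ -c := by
  have hneg : ∀ t ∈ Ico a T, g t < 0 := by
    refine forall_mem_Ico_neg_of_continuousOn hg ha fun t ht hlt ↦ ?_
    have hle : ∀ r ∈ Ico a t, g r ≤ -c := fun r hr ↦
      hboot r ⟨hr.1, hr.2.trans ht.2⟩ fun q hq ↦ hlt q ⟨hq.1, hq.2.trans_lt hr.2⟩
    have hcl : t ∈ closure (Ico a t) := by
      rw [closure_Ico ht.1.ne]
      exact right_mem_Icc.2 ht.1.le
    have hgt : ContinuousWithinAt g (Ico a t) t :=
      (hg t (Ioo_subset_Ico_self ht)).mono (Ico_subset_Ico_right ht.2.le)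
    linarith [hgt.closure_le hcl continuousWithinAt_const hle]
  exact fun s hs ↦ hboot s hs fun t ht ↦ hneg t ⟨ht.1, ht.2.trans_lt hs.2⟩

lemma continuousOn_deriv_of_contDiffOn_Ico {b : ℝ → ℝ} {a T : ℝ}
    (hb : ContDiffOn ℝ 1 b (Ico a T)) (ha : DifferentiableAt ℝ b a) :
    ContinuousOn (deriv b) (Ico a T) := by
  refine (hb.continuousOn_derivWithin (uniqueDiffOn_Ico a T) le_rfl).congr fun t ht ↦ ?_
  rcases ht.1.eq_or_lt with rfl | hat
  · exact (ha.derivWithin (uniqueDiffOn_Ico _ _ _ ht)).symm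
  · exact (derivWithin_of_mem_nhds (Ico_mem_nhds hat ht.2)).symm

lemma deriv_le_neg_sqrt_of_mechEnergy_gt {ω δ γ T : ℝ} {b : ℝ → ℝ}
    (hδ : -1 < δ) (hδγ : δ < γ) (hω : 0 < ω) (hb : ContDiffOn ℝ 2 b (Ico 0 T))
    (hbnn : ∀ s ∈ Ico 0 T, 0 ≤ b s)
    (hode : ∀ s ∈ Ico 0 T, ω * deriv (deriv b) s + (b s ^ δ - b s ^ γ) ≤ 0)
    (hE : 1 / (δ + 1) - 1 / (γ + 1) < mechEnergy ω δ γ b 0) (hb0 : deriv b 0 < 0) :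
    ∀ s ∈ Ico 0 T,
      deriv b s ≤ -√(2 / ω * (mechEnergy ω δ γ b 0 - (1 / (δ + 1) - 1 / (γ + 1)))) := by
  -- `deriv b 0 ≠ 0` forces `b` to be differentiable at `0` from both sides.
  have hb'c : ContinuousOn (deriv b) (Ico 0 T) :=
    continuousOn_deriv_of_contDiffOn_Ico (hb.of_le (by norm_num))
      (differentiableAt_of_deriv_ne_zero hb0.ne)
  have hb'' : DifferentiableOn ℝ (deriv b) (Ioo 0 T) :=
    ((hb.mono Ioo_subset_Ico_self).deriv_of_isOpen isOpen_Ioo le_rfl).differentiableOn one_ne_zero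
  refine forall_mem_Ico_le_neg_of_bootstrap hb'c hb0
    (Real.sqrt_pos.2 (mul_pos (by positivity) (sub_pos.2 hE))) fun s hs hneg ↦ ?_
  have hsub : Icc 0 s ⊆ Ico 0 T := Icc_subset_Ico_right hs.2
  have hEs : mechEnergy ω δ γ b 0 ≤ mechEnergy ω δ γ b s :=
    mechEnergy_le_of_deriv_neg hδ (hδ.trans hδγ) hs.1 (hb'c.mono hsub)
      (fun t ht ↦ hb''.differentiableAt (Ioo_mem_nhds ht.1 (ht.2.trans hs.2))) hneg
      (hbnn s hs) fun t ht ↦ hode t (hsub (Ioo_subset_Icc_self ht))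
  have hU := mechPotential_le hδ hδγ (hbnn s hs)
  have hkin : mechEnergy ω δ γ b 0 - (1 / (δ + 1) - 1 / (γ + 1)) ≤ ω / 2 * deriv b s ^ 2 := by
    unfold mechEnergy at hEs ⊢
    linarith
  refine le_neg_sqrt_of_neg_of_le_sq (hneg s (right_mem_Icc.2 hs.1)) ?_
  calc _ ≤ 2 / ω * (ω / 2 * deriv b s ^ 2) := by gcongr
    _ = deriv b s ^ 2 := by field_simp

lemma false_of_nonneg_of_deriv_le_neg {b : ℝ → ℝ} {c : ℝ} (hc : 0 < c)
    (hb : ContDiffOn ℝ 1 b (Ici 0)) (hbnn : ∀ s ∈ Ici (0 : ℝ), 0 ≤ b s)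
    (hb' : ∀ s ∈ Ici (0 : ℝ), deriv b s ≤ -c) : False := by
  have hb0 := hbnn 0 self_mem_Ici
  have hy : (0 : ℝ) ≤ b 0 / c + 1 := by positivity
  have hmvt := (convex_Ici (0 : ℝ)).image_sub_le_mul_sub_of_deriv_le hb.continuousOn
    ((hb.mono interior_subset).differentiableOn one_ne_zero)
    (fun t ht ↦ hb' t (interior_subset ht)) 0 self_mem_Ici _ hy hy
  have hdrop : -c * (b 0 / c + 1 - 0) = -b 0 - c := by field_simp; ring
  linarith [hbnn _ hy]

theorem mechanical_blowup_B_general (γ δ ω : ℝ) (hδ1 : -1 < δ) (hδγ : δ < γ) (hω : 0 < ω) :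
    (∀ (T : ℝ) (b : ℝ → ℝ), 0 < T →
      ContDiffOn ℝ 2 b (Ico 0 T) →
      (∀ s ∈ Ico (0 : ℝ) T, 0 ≤ b s) →
      (∀ s ∈ Ico (0 : ℝ) T,
        ω * deriv (deriv b) s + (b s ^ δ - b s ^ γ) ≤ 0) →
      (ω / 2 * (deriv b 0) ^ 2
          + (b 0 ^ (δ + 1) / (δ + 1) - b 0 ^ (γ + 1) / (γ + 1))
          > 1 / (δ + 1) - 1 / (γ + 1)) →
      deriv b 0 < 0 →
      ∀ s ∈ Ico (0 : ℝ) T,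
        deriv b s ≤ -Real.sqrt ((2 / ω) *
          ((ω / 2 * (deriv b 0) ^ 2
            + (b 0 ^ (δ + 1) / (δ + 1) - b 0 ^ (γ + 1) / (γ + 1)))
          - (1 / (δ + 1) - 1 / (γ + 1))))) ∧
    (∀ b : ℝ → ℝ,
      ContDiffOn ℝ 2 b (Ici 0) →
      (∀ s ∈ Ici (0 : ℝ), 0 ≤ b s) →
      (∀ s ∈ Ici (0 : ℝ),
        ω * deriv (deriv b) s + (b s ^ δ - b s ^ γ) ≤ 0) →
      (ω / 2 * (deriv b 0) ^ 2
          + (b 0 ^ (δ + 1) / (δ + 1) - b 0 ^ (γ + 1) / (γ + 1))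
          > 1 / (δ + 1) - 1 / (γ + 1)) →
      deriv b 0 < 0 → False) := by
  have hbound := fun (T : ℝ) (b : ℝ → ℝ) (_ : 0 < T) hb hbnn hode hE hb0 ↦
    deriv_le_neg_sqrt_of_mechEnergy_gt (T := T) (b := b) hδ1 hδγ hω hb hbnn hode hE hb0
  refine ⟨hbound, fun b hb hbnn hode hE hb0 ↦ ?_⟩
  have hc : 0 < √(2 / ω * (mechEnergy ω δ γ b 0 - (1 / (δ + 1) - 1 / (γ + 1)))) :=
    Real.sqrt_pos.2 (mul_pos (by positivity) (sub_pos.2 hE))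
  refine false_of_nonneg_of_deriv_le_neg hc (hb.of_le (by norm_num)) hbnn fun s hs ↦ ?_
  exact hbound (s + 1) b (by linarith [mem_Ici.1 hs]) (hb.mono Ico_subset_Ici_self)
    (fun t ht ↦ hbnn t ht.1) (fun t ht ↦ hode t ht.1) hE hb0 s ⟨hs, lt_add_one s⟩

/-- Blow-up for the mechanical ODE, case (B): with `0 < γ < 1`, `−1 < δ < γ`, `ω > 0`,
`U(b) = b^{δ+1}/(δ+1) − b^{γ+1}/(γ+1)`, `U_max = 1/(δ+1) − 1/(γ+1)`, any nonnegative
`C²` solution of `ω b'' + b^δ − b^γ ≤ 0` with `ℰ(0) > U_max` and `b'(0) < 0`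
satisfies `b'(s) ≤ −√((2/ω)(ℰ(0) − U_max))` for as long as it exists, and
hence cannot exist on all of `[0,∞)`. -/
theorem mechanical_blowup_B (γ δ ω : ℝ) (hγ0 : 0 < γ) (hγ1 : γ < 1)
    (hδ1 : -1 < δ) (hδγ : δ < γ) (hω : 0 < ω) :
    (∀ (T : ℝ) (b : ℝ → ℝ), 0 < T →
      ContDiffOn ℝ 2 b (Ico 0 T) →
      (∀ s ∈ Ico (0 : ℝ) T, 0 ≤ b s) →
      (∀ s ∈ Ico (0 : ℝ) T,
        ω * deriv (deriv b) s + (b s ^ δ - b s ^ γ) ≤ 0) →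
      (ω / 2 * (deriv b 0) ^ 2
          + (b 0 ^ (δ + 1) / (δ + 1) - b 0 ^ (γ + 1) / (γ + 1))
          > 1 / (δ + 1) - 1 / (γ + 1)) →
      deriv b 0 < 0 →
      ∀ s ∈ Ico (0 : ℝ) T,
        deriv b s ≤ -Real.sqrt ((2 / ω) *
          ((ω / 2 * (deriv b 0) ^ 2
            + (b 0 ^ (δ + 1) / (δ + 1) - b 0 ^ (γ + 1) / (γ + 1)))
          - (1 / (δ + 1) - 1 / (γ + 1))))) ∧
    (∀ b : ℝ → ℝ,
      ContDiffOn ℝ 2 b (Ici 0) →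
      (∀ s ∈ Ici (0 : ℝ), 0 ≤ b s) →
      (∀ s ∈ Ici (0 : ℝ),
        ω * deriv (deriv b) s + (b s ^ δ - b s ^ γ) ≤ 0) →
      (ω / 2 * (deriv b 0) ^ 2
          + (b 0 ^ (δ + 1) / (δ + 1) - b 0 ^ (γ + 1) / (γ + 1))
          > 1 / (δ + 1) - 1 / (γ + 1)) →
      deriv b 0 < 0 → False) :=
  mechanical_blowup_B_general γ δ ω hδ1 hδγ hω
end
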